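/- arXiv:1810.03497 — 5 statements merged into one kernel-verified Lean document; each statement's English description precedes it below -/
import Mathlib

section
/- Let ζ ∈ ℂ with |ζ| ≥ 1, ζ ≠ 0. If ψ ∈ ℓ²(ℕ₀; ℂ²) satisfies ψ_{n−1}^B + conj(ζ) ψ_n^B = 0 and ψ_{n+1}^A + ζ ψ_n^A = 0 for all n ≥ 0 (with ψ_{−1}^B = 0), then ψ = 0. That is, 0 is not an eigenvalue of the tight-binding zigzag edge Hamiltonian when |ζ| ≥ 1. -/
/-! The `B` equations form a recursion started from `ψ_{-1}^B = 0` that can be solved for `ψ_n^B`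
(as `conj ζ ≠ 0`), so `ψ^B = 0`. The `A` equations give `ψ_n^A = (-ζ)^n ψ_0^A`, whose norm does
not decrease when `|ζ| ≥ 1`; square summability forces it to tend to `0`, so `ψ_0^A = 0`. -/

theorem eq_zero_of_shift_add_mul_eq_zero {R : Type*} [Semiring R] [NoZeroDivisors R]
    {c : R} (hc : c ≠ 0) {b : ℕ → R}
    (hb : ∀ n, (if n = 0 then 0 else b (n - 1)) + c * b n = 0) (n : ℕ) : b n = 0 := by
  induction n with
  | zero => simpa [hc] using hb 0
  | succ k ih => simpa [ih, hc] using hb (k + 1)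

section NormedDivisionRing

variable {R : Type*} [NormedDivisionRing R] {z : R} {a : ℕ → R}

theorem eq_neg_pow_mul_of_add_mul_eq_zero (ha : ∀ n, a (n + 1) + z * a n = 0) (n : ℕ) :
    a n = (-z) ^ n * a 0 := by
  induction n with
  | zero => simp
  | succ k ih => rw [eq_neg_of_add_eq_zero_left (ha k), ih, pow_succ', neg_mul, neg_mul, mul_assoc]

theorem eq_zero_of_add_mul_eq_zero_of_summable_sq (hz : 1 ≤ ‖z‖)
    (ha : ∀ n, a (n + 1) + z * a n = 0) (hsum : Summable fun n => ‖a n‖ ^ 2) (n : ℕ) :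
    a n = 0 := by
  have hmono : ∀ m, ‖a 0‖ ^ 2 ≤ ‖a m‖ ^ 2 := fun m => by
    rw [eq_neg_pow_mul_of_add_mul_eq_zero ha m, norm_mul, norm_pow, norm_neg]
    gcongr
    exact le_mul_of_one_le_left (norm_nonneg _) (one_le_pow₀ hz)
  have hsq : ‖a 0‖ ^ 2 ≤ 0 := ge_of_tendsto' hsum.tendsto_atTop_zero hmono
  have ha0 : a 0 = 0 := by simpa using hsq
  rw [eq_neg_pow_mul_of_add_mul_eq_zero ha n, ha0, mul_zero]

end NormedDivisionRing

theorem stmt_3_general (ζ : ℂ) (hζ : 1 ≤ ‖ζ‖)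
    (ψA ψB : ℕ → ℂ)
    (hl2 : Summable fun n => ‖ψA n‖ ^ 2 + ‖ψB n‖ ^ 2)
    (heqA : ∀ n : ℕ, (if n = 0 then 0 else ψB (n - 1)) + (starRingEnd ℂ) ζ * ψB n = 0)
    (heqB : ∀ n : ℕ, ψA (n + 1) + ζ * ψA n = 0) :
    ∀ n, ψA n = 0 ∧ ψB n = 0 := by
  have hζ0 : (starRingEnd ℂ) ζ ≠ 0 := by
    rw [map_ne_zero, ← norm_pos_iff]
    linarith
  have hA : Summable fun n => ‖ψA n‖ ^ 2 :=
    hl2.of_nonneg_of_le (fun _ => by positivity) (fun _ => le_add_of_nonneg_right (by positivity))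
  exact fun n => ⟨eq_zero_of_add_mul_eq_zero_of_summable_sq hζ heqB hA n,
    eq_zero_of_shift_add_mul_eq_zero hζ0 heqA n⟩

theorem stmt_3 (ζ : ℂ) (hζ0 : ζ ≠ 0) (hζ : 1 ≤ ‖ζ‖)
    (ψA ψB : ℕ → ℂ)
    (hl2 : Summable fun n => ‖ψA n‖ ^ 2 + ‖ψB n‖ ^ 2)
    (heqA : ∀ n : ℕ, (if n = 0 then 0 else ψB (n - 1)) + (starRingEnd ℂ) ζ * ψB n = 0)
    (heqB : ∀ n : ℕ, ψA (n + 1) + ζ * ψA n = 0) :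
    ∀ n, ψA n = 0 ∧ ψB n = 0 :=
  stmt_3_general ζ hζ ψA ψB hl2 heqA heqB
end

section
/- Let ζ ∈ ℂ with ζ ≠ 0, and let z ∈ ℝ with |z| < |1 − |ζ|| (and |ζ| ≠ 1). Let λ₁ = [−(1+|ζ|²−z²) + sqrt((1+|ζ|²−z²)² − 4|ζ|²)]/(2 conj(ζ)) and λ₂ = [−(1+|ζ|²−z²) − sqrt((1+|ζ|²−z²)² − 4|ζ|²)]/(2 conj(ζ)). Then |λ₁| < 1 < |λ₂|. -/
/-!
Write `r = ‖ζ‖` and `S = 1 + r² - z²`. Since `‖conj ζ‖ = r`, the moduli of the two eigenvalues are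
`(S ∓ √(S² - 4r²)) / (2r)`, i.e. `μ / r` for the two roots `μ` of `t² - S t + r²`, both positive.
The hypothesis on `z` says exactly that `S - 2r = (1 - r)² - z² > 0`, so the quadratic is negative
at `t = r`, which therefore lies strictly between its roots.
-/

lemma lt_and_lt_of_quadratic_neg {b c t : ℝ} (h : t ^ 2 - b * t + c < 0) :
    (b - √(b ^ 2 - 4 * c)) / 2 < t ∧ t < (b + √(b ^ 2 - 4 * c)) / 2 := by
  have hdist : |2 * t - b| < √(b ^ 2 - 4 * c) :=
    (Real.lt_sqrt (abs_nonneg _)).2 (by rw [sq_abs]; linarith)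
  obtain ⟨hlo, hhi⟩ := abs_lt.1 hdist
  constructor <;> linarith

lemma norm_ofReal_div_two_mul_conj (x : ℝ) (ζ : ℂ) :
    ‖(x : ℂ) / (2 * starRingEnd ℂ ζ)‖ = |x| / (2 * ‖ζ‖) := by
  rw [norm_div, norm_mul, Complex.norm_conj, Complex.norm_real, Real.norm_eq_abs, Complex.norm_two]

theorem stmt_6_general (ζ : ℂ) (z : ℝ) (hζ0 : ζ ≠ 0)
    (hz : |z| < |1 - ‖ζ‖|) :
    ‖(((-(1 + ‖ζ‖ ^ 2 - z ^ 2) +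
        Real.sqrt ((1 + ‖ζ‖ ^ 2 - z ^ 2) ^ 2 - 4 * ‖ζ‖ ^ 2) : ℝ) : ℂ) /
        (2 * (starRingEnd ℂ) ζ))‖ < 1 ∧
    1 < ‖(((-(1 + ‖ζ‖ ^ 2 - z ^ 2) -
        Real.sqrt ((1 + ‖ζ‖ ^ 2 - z ^ 2) ^ 2 - 4 * ‖ζ‖ ^ 2) : ℝ) : ℂ) /
        (2 * (starRingEnd ℂ) ζ))‖ := by
  simp only [norm_ofReal_div_two_mul_conj]
  set r := ‖ζ‖
  set S := 1 + r ^ 2 - z ^ 2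
  have hr : 0 < r := norm_pos_iff.2 hζ0
  have hS : 2 * r < S := by nlinarith [sq_lt_sq.2 hz]
  obtain ⟨hlo, hhi⟩ := lt_and_lt_of_quadratic_neg (b := S) (c := r ^ 2) (t := r)
    (by nlinarith [mul_pos hr (sub_pos.2 hS)])
  have hsqrt : √(S ^ 2 - 4 * r ^ 2) < S := (Real.sqrt_lt' (by linarith)).2 (by nlinarith)
  rw [abs_of_neg (by linarith), abs_of_neg (by linarith [Real.sqrt_nonneg (S ^ 2 - 4 * r ^ 2)]),
    div_lt_one (by positivity), one_lt_div (by positivity)]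
  constructor <;> linarith

theorem stmt_6 (ζ : ℂ) (z : ℝ) (hζ0 : ζ ≠ 0) (hζ1 : ‖ζ‖ ≠ 1)
    (hz : |z| < |1 - ‖ζ‖|) :
    ‖(((-(1 + ‖ζ‖ ^ 2 - z ^ 2) +
        Real.sqrt ((1 + ‖ζ‖ ^ 2 - z ^ 2) ^ 2 - 4 * ‖ζ‖ ^ 2) : ℝ) : ℂ) /
        (2 * (starRingEnd ℂ) ζ))‖ < 1 ∧
    1 < ‖(((-(1 + ‖ζ‖ ^ 2 - z ^ 2) -
        Real.sqrt ((1 + ‖ζ‖ ^ 2 - z ^ 2) ^ 2 - 4 * ‖ζ‖ ^ 2) : ℝ) : ℂ) /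
        (2 * (starRingEnd ℂ) ζ))‖ :=
  stmt_6_general ζ z hζ0 hz
end

section
/- Let ζ ∈ ℂ with ζ ≠ 0 and let z ∈ ℝ with ||ζ| − 1| ≤ |z| ≤ |ζ| + 1. Then every root λ of the quadratic equation conj(ζ) λ² + (1 + |ζ|² − z²) λ + ζ = 0 satisfies |λ| = 1. -/
/-!
Multiplying the equation by `conj ζ` turns it into `μ² + b μ + |ζ|² = 0` for `μ = conj(ζ) λ`,
with real `b = 1 + |ζ|² - z²`. The hypothesis on `z` says exactly that the discriminant
`b² - 4|ζ|²` is nonpositive, so the roots `μ` are conjugate and `|μ|² = |ζ|²` is their product;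
hence `|ζ| |λ| = |ζ|`.
-/

open ComplexConjugate

lemma sq_one_add_sq_sub_sq_le {r z : ℝ} (h1 : |r - 1| ≤ |z|) (h2 : |z| ≤ r + 1) :
    (1 + r ^ 2 - z ^ 2) ^ 2 ≤ 4 * r ^ 2 := by
  have hlow : (r - 1) ^ 2 ≤ z ^ 2 := sq_le_sq.mpr h1
  have hupp : z ^ 2 ≤ (r + 1) ^ 2 :=
    sq_le_sq' (by linarith [neg_abs_le z]) (le_abs_self z |>.trans h2)
  nlinarith [mul_nonneg (sub_nonneg.mpr hlow) (sub_nonneg.mpr hupp)]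

lemma Complex.normSq_eq_of_sq_add_mul_add_eq_zero {b c : ℝ} (hdisc : b ^ 2 ≤ 4 * c) {μ : ℂ}
    (h : μ ^ 2 + b * μ + c = 0) : normSq μ = c := by
  have hre : μ.re ^ 2 - μ.im ^ 2 + b * μ.re + c = 0 := by
    simpa [sq] using congrArg re h
  have him : μ.im * (2 * μ.re + b) = 0 := by
    linear_combination (by simpa [sq] using congrArg im h : _ = _)
  have hvertex : 2 * μ.re + b = 0 := by
    rcases mul_eq_zero.mp him with hreal | hvertex
    · -- a real root must be the double root `-b/2`
      nlinarith [sq_nonneg (2 * μ.re + b)]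
    · exact hvertex
  rw [normSq_apply]
  linear_combination -hre + μ.re * hvertex

theorem stmt_8 (ζ : ℂ) (z : ℝ) (hζ : ζ ≠ 0)
    (h1 : |‖ζ‖ - 1| ≤ |z|) (h2 : |z| ≤ ‖ζ‖ + 1) :
    ∀ lam : ℂ,
      (starRingEnd ℂ) ζ * lam ^ 2 + ((1 + ‖ζ‖ ^ 2 - z ^ 2 : ℝ) : ℂ) * lam + ζ = 0 →
      ‖lam‖ = 1 := by
  intro lam heq
  have hμ : (conj ζ * lam) ^ 2 + ((1 + ‖ζ‖ ^ 2 - z ^ 2 : ℝ) : ℂ) * (conj ζ * lam)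
      + ((‖ζ‖ ^ 2 : ℝ) : ℂ) = 0 := by
    rw [Complex.ofReal_pow, ← Complex.mul_conj', mul_comm ζ]
    linear_combination conj ζ * heq
  have hnorm := Complex.normSq_eq_of_sq_add_mul_add_eq_zero (sq_one_add_sq_sub_sq_le h1 h2) hμ
  rw [← Complex.sq_norm, norm_mul, Complex.norm_conj, mul_pow] at hnorm
  have hsq : ‖lam‖ ^ 2 = 1 :=
    mul_left_cancel₀ (by positivity) (hnorm.trans (mul_one _).symm)
  exact (pow_eq_one_iff_of_nonneg (norm_nonneg lam) two_ne_zero).mp hsq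
end

section
/- Let 0 < a < γ with γ > 2a, and let f(t) = a e^{−γ|t|} for t ∈ ℝ. Then for every integer m ≥ 1, the m-fold self-convolution of f/4 satisfies ((a/4) e^{−γ|·|})^{*m}(t) ≤ 2^{−m} a · e^{−(γ−a)|t|} for all t ∈ ℝ. -/
open MeasureTheory Real

/-!
Induction on `m`, keeping also `0 ≤ F m`. Since `|t| ≤ |s| + |t - s|`, the kernel splits as
`e^{-(γ-a)|s|} e^{-γ|t-s|} ≤ e^{-(γ-a)|t|} e^{-a|t-s|}`, so one more convolution with
`(a/4) e^{-γ|·|}` costs at most the factor `(a/4) ∫ e^{-a|u|} du = 1/2`.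
-/

lemma integral_exp_neg_mul_abs {b : ℝ} (hb : 0 < b) : ∫ x, exp (-b * |x|) = 2 / b := by
  have hIoi : ∫ x in Set.Ioi (0 : ℝ), exp (-b * x) = b⁻¹ := by
    have := integral_comp_mul_left_Ioi (fun x => exp (-x)) 0 hb
    simp only [mul_zero, neg_mul] at this ⊢
    rw [this, integral_exp_neg_Ioi_zero, smul_eq_mul, mul_one]
  rw [integral_comp_abs (f := fun x => exp (-b * x)), hIoi, div_eq_mul_inv]

lemma integrable_exp_neg_mul_abs {b : ℝ} (hb : 0 < b) : Integrable fun x : ℝ => exp (-b * |x|) :=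
  .of_integral_ne_zero (by rw [integral_exp_neg_mul_abs hb]; positivity)

lemma exp_neg_mul_abs_mul_exp_neg_mul_abs_sub_le {κ γ : ℝ} (hκγ : κ ≤ γ) (s t : ℝ) :
    exp (-(γ - κ) * |s|) * exp (-γ * |t - s|) ≤ exp (-(γ - κ) * |t|) * exp (-κ * |t - s|) := by
  have htri : |t| ≤ |s| + |t - s| := by simpa using abs_add_le s (t - s)
  rw [← exp_add, ← exp_add, exp_le_exp]
  nlinarith [mul_le_mul_of_nonneg_left htri (sub_nonneg.mpr hκγ)]

lemma integral_mul_exp_neg_mul_abs_sub_le {κ γ c C : ℝ} (hκ : 0 < κ) (hκγ : κ ≤ γ) (hc : 0 ≤ c)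
    {g : ℝ → ℝ} (hg_nonneg : ∀ s, 0 ≤ g s) (hg_le : ∀ s, g s ≤ C * exp (-(γ - κ) * |s|))
    (t : ℝ) :
    ∫ s, g s * (c * exp (-γ * |t - s|)) ≤ C * c * (2 / κ) * exp (-(γ - κ) * |t|) := by
  have hC : 0 ≤ C := nonneg_of_mul_nonneg_left ((hg_nonneg 0).trans (hg_le 0)) (exp_pos _)
  set D := C * c * exp (-(γ - κ) * |t|)
  have hbound : ∀ s, g s * (c * exp (-γ * |t - s|)) ≤ D * exp (-κ * |t - s|) := fun s =>
    calc g s * (c * exp (-γ * |t - s|))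
        ≤ C * exp (-(γ - κ) * |s|) * (c * exp (-γ * |t - s|)) := by gcongr; exact hg_le s
      _ = C * c * (exp (-(γ - κ) * |s|) * exp (-γ * |t - s|)) := by ring
      _ ≤ C * c * (exp (-(γ - κ) * |t|) * exp (-κ * |t - s|)) :=
          mul_le_mul_of_nonneg_left (exp_neg_mul_abs_mul_exp_neg_mul_abs_sub_le hκγ s t)
            (by positivity)
      _ = D * exp (-κ * |t - s|) := by ring
  have hD : ∫ s, D * exp (-κ * |t - s|) = D * (2 / κ) := by
    rw [integral_const_mul, integral_sub_left_eq_self (fun u => exp (-κ * |u|)),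
      integral_exp_neg_mul_abs hκ]
  calc ∫ s, g s * (c * exp (-γ * |t - s|))
      ≤ ∫ s, D * exp (-κ * |t - s|) :=
        integral_mono_of_nonneg (.of_forall fun s => by have := hg_nonneg s; positivity)
          (((integrable_exp_neg_mul_abs hκ).comp_sub_left t).const_mul D) (.of_forall hbound)
    _ = C * c * (2 / κ) * exp (-(γ - κ) * |t|) := by rw [hD]; ring

theorem stmt_14 (a γ : ℝ) (ha : 0 < a) (hγ : 2 * a < γ)
    (h : ℝ → ℝ) (hh : ∀ t, h t = (a / 4) * Real.exp (-γ * |t|))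
    (F : ℕ → ℝ → ℝ) (hF1 : F 1 = h)
    (hFs : ∀ m, 1 ≤ m → ∀ t, F (m + 1) t = ∫ s, F m s * h (t - s)) :
    ∀ m, 1 ≤ m → ∀ t : ℝ, F m t ≤ a / 2 ^ m * Real.exp (-(γ - a) * |t|) := by
  obtain rfl : h = fun t => a / 4 * exp (-γ * |t|) := funext hh
  have haγ : a ≤ γ := by linarith
  suffices H : ∀ m, 1 ≤ m → ∀ t, 0 ≤ F m t ∧ F m t ≤ a / 2 ^ m * exp (-(γ - a) * |t|) from
    fun m hm t => (H m hm t).2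
  intro m hm
  induction m, hm using Nat.le_induction with
  | base =>
    intro t
    rw [hF1]
    refine ⟨by positivity, ?_⟩
    have : exp (-γ * |t|) ≤ exp (-(γ - a) * |t|) := exp_le_exp.mpr (by nlinarith [abs_nonneg t])
    calc a / 4 * exp (-γ * |t|) ≤ a / 4 * exp (-(γ - a) * |t|) := by gcongr
      _ ≤ a / 2 ^ 1 * exp (-(γ - a) * |t|) := by gcongr; norm_num
  | succ m hm ih =>
    intro t
    rw [hFs m hm t]
    refine ⟨integral_nonneg fun s => ?_, ?_⟩
    · have := (ih s).1; positivity
    · calc _ ≤ a / 2 ^ m * (a / 4) * (2 / a) * exp (-(γ - a) * |t|) :=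
            integral_mul_exp_neg_mul_abs_sub_le ha haγ (by positivity) (fun s => (ih s).1)
              (fun s => (ih s).2) t
        _ = a / 2 ^ (m + 1) * exp (-(γ - a) * |t|) := by field_simp; ring
end

section
/- Let Γ ⊂ ℝ² be a discrete set and suppose (p_ω)_{ω∈Γ} is a family of unit vectors in a Hilbert space H satisfying |⟨p_ω, p_{ω'}⟩ − δ_{ω,ω'}| ≤ ε e^{−c|ω−ω'|} for all ω, ω' ∈ Γ, with c > 0 and ε > 0 sufficiently small (depending only on c and sup_{ω} Σ_{ω'≠ω} e^{−(c/2)|ω−ω'|} < ∞). Then the Gram matrix P = (⟨p_ω, p_{ω'}⟩) is invertible as an operator on ℓ²(Γ), and its inverse M = (M^{ω,ω'}) satisfies |M^{ω,ω'} − δ_{ω,ω'}| ≤ C ε e^{−(c/2)|ω−ω'|} for a constant C independent of ε. -/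
/-!
Write the Gram matrix as `P = 1 - D` with `‖D i j‖ ≤ ε e^{-c d(i,j)}`. By the triangle inequality
`e^{-c d(i,j)} e^{-(c/2) d(j,k)} ≤ e^{-(c/2) d(i,k)} e^{-(c/2) d(i,j)}`, so left multiplication by
`D` maps a matrix bounded by `a e^{-(c/2) d}` to one bounded by `ε a S e^{-(c/2) d}`, where `S` bounds
the row sums of `e^{-(c/2) d}`. For `ε S ≤ 1/2` the Neumann series `N = D + D² + ⋯` converges
entrywise with `‖N i k‖ ≤ 2 ε e^{-(c/2) d(i,k)}`, and `1 + N` is a right inverse of `P`. The same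
series for `Dᵀ` gives a left inverse, and associativity of the absolutely convergent triple
product shows that the two coincide.
-/

open Real Matrix

section

variable {ι α : Type*} [PseudoMetricSpace α]

noncomputable def expWeight (c : ℝ) (x : ι → α) (i j : ι) : ℝ :=
  exp (-c * dist (x i) (x j))

section expWeight

variable {c : ℝ} {x : ι → α}

theorem expWeight_pos (i j : ι) : 0 < expWeight c x i j := exp_pos _

@[simp]
theorem expWeight_self (i : ι) : expWeight c x i i = 1 := by simp [expWeight]

theorem expWeight_comm (i j : ι) : expWeight c x i j = expWeight c x j i := by
  rw [expWeight, expWeight, dist_comm]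

theorem expWeight_le_one (hc : 0 ≤ c) (i j : ι) : expWeight c x i j ≤ 1 :=
  exp_le_one_iff.2 (by nlinarith [dist_nonneg (x := x i) (y := x j)])

theorem expWeight_le_expWeight_half (hc : 0 ≤ c) (i j : ι) :
    expWeight c x i j ≤ expWeight (c / 2) x i j :=
  exp_le_exp.2 (by nlinarith [dist_nonneg (x := x i) (y := x j)])

theorem expWeight_mul_expWeight_half_le (hc : 0 ≤ c) (i j k : ι) :
    expWeight c x i j * expWeight (c / 2) x j k ≤
      expWeight (c / 2) x i k * expWeight (c / 2) x i j := by
  simp only [expWeight, ← exp_add]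
  exact exp_le_exp.2 (by nlinarith [dist_triangle (x i) (x j) (x k)])

theorem tsum_expWeight_le [DecidableEq ι] {K : ℝ} {i : ι} (hw : Summable (expWeight c x i))
    (hK : ∑' j, (if j = i then 0 else expWeight c x i j) ≤ K) :
    ∑' j, expWeight c x i j ≤ K + 1 := by
  rw [hw.tsum_eq_add_tsum_ite i, expWeight_self]
  linarith

theorem summable_expWeight_mul_expWeight {S : ℝ} (hw : ∀ i, Summable (expWeight c x i))
    (hS : ∀ i, ∑' j, expWeight c x i j ≤ S) (i : ι) :
    Summable fun q : ι × ι => expWeight c x i q.1 * expWeight c x q.1 q.2 := by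
  have hpos : ∀ j l, 0 ≤ expWeight c x i j * expWeight c x j l := fun j l =>
    (mul_pos (expWeight_pos i j) (expWeight_pos j l)).le
  rw [summable_prod_of_nonneg fun q => hpos q.1 q.2]
  refine ⟨fun j => (hw j).mul_left (expWeight c x i j), ?_⟩
  simp only [tsum_mul_left]
  exact ((hw i).mul_right S).of_nonneg_of_le
    (fun j => mul_nonneg (expWeight_pos i j).le (tsum_nonneg fun l => (expWeight_pos j l).le))
    fun j => mul_le_mul_of_nonneg_left (hS j) (expWeight_pos i j).le

end expWeight

theorem tsum_mul_tsum_comm {𝕜 β γ : Type*} [NormedField 𝕜] [CompleteSpace 𝕜] {a : β → 𝕜}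
    {f : β → γ → 𝕜} (h : Summable fun q : β × γ => a q.1 * f q.1 q.2) :
    ∑' b, a b * ∑' c, f b c = ∑' c, ∑' b, a b * f b c := by
  simp_rw [← tsum_mul_left]
  exact (h.tsum_comm (f := fun b c => a b * f b c)).symm

section Neumann

variable {𝕜 : Type*} [NormedField 𝕜] {x : ι → α} {c S ε : ℝ}

theorem hasSum_one_add_mul_one_add [DecidableEq ι]
    {A B : Matrix ι ι 𝕜} {i k : ι} {s : 𝕜} (h : HasSum (fun j => A i j * B j k) s) :
    HasSum (fun j => (1 + A) i j * (1 + B) j k) ((1 : Matrix ι ι 𝕜) i k + A i k + B i k + s) := by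
  have h₁ : HasSum (fun j => (1 : Matrix ι ι 𝕜) i j * (1 : Matrix ι ι 𝕜) j k)
      ((1 : Matrix ι ι 𝕜) i k) := by
    simpa using hasSum_single (f := fun j => (1 : Matrix ι ι 𝕜) i j * (1 : Matrix ι ι 𝕜) j k) i
      fun j hj => by simp [Matrix.one_apply_ne' hj]
  have h₂ : HasSum (fun j => A i j * (1 : Matrix ι ι 𝕜) j k) (A i k) := by
    simpa using hasSum_single (f := fun j => A i j * (1 : Matrix ι ι 𝕜) j k) k
      fun j hj => by simp [Matrix.one_apply_ne hj]
  have h₃ : HasSum (fun j => (1 : Matrix ι ι 𝕜) i j * B j k) (B i k) := by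
    simpa using hasSum_single (f := fun j => (1 : Matrix ι ι 𝕜) i j * B j k) i
      fun j hj => by simp [Matrix.one_apply_ne' hj]
  convert ((h₁.add h₂).add h₃).add h using 1
  ext j
  simp only [Matrix.add_apply]
  ring

theorem norm_mul_le_expWeight (hc : 0 ≤ c) {D A : Matrix ι ι 𝕜} {a : ℝ} (hε : 0 ≤ ε) (ha : 0 ≤ a)
    (hD : ∀ i j, ‖D i j‖ ≤ ε * expWeight c x i j)
    (hA : ∀ i j, ‖A i j‖ ≤ a * expWeight (c / 2) x i j) (i j k : ι) :
    ‖D i j * A j k‖ ≤ ε * a * expWeight (c / 2) x i k * expWeight (c / 2) x i j :=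
  calc ‖D i j * A j k‖ ≤ ε * expWeight c x i j * (a * expWeight (c / 2) x j k) := by
        rw [norm_mul]
        exact mul_le_mul (hD i j) (hA j k) (norm_nonneg _)
          (mul_nonneg hε (expWeight_pos i j).le)
    _ = ε * a * (expWeight c x i j * expWeight (c / 2) x j k) := by ring
    _ ≤ ε * a * (expWeight (c / 2) x i k * expWeight (c / 2) x i j) :=
        mul_le_mul_of_nonneg_left (expWeight_mul_expWeight_half_le hc i j k) (mul_nonneg hε ha)
    _ = _ := by ring

variable [CompleteSpace 𝕜]

theorem summable_mul_and_norm_tsum_mul_le (hc : 0 ≤ c)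
    (hw : ∀ i, Summable (expWeight (c / 2) x i)) (hS : ∀ i, ∑' j, expWeight (c / 2) x i j ≤ S)
    {D A : Matrix ι ι 𝕜} {a : ℝ} (hε : 0 ≤ ε) (ha : 0 ≤ a)
    (hD : ∀ i j, ‖D i j‖ ≤ ε * expWeight c x i j)
    (hA : ∀ i j, ‖A i j‖ ≤ a * expWeight (c / 2) x i j) (i k : ι) :
    Summable (fun j => D i j * A j k) ∧
      ‖∑' j, D i j * A j k‖ ≤ ε * a * S * expWeight (c / 2) x i k := by
  have hbound (j : ι) := norm_mul_le_expWeight hc hε ha hD hA i j k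
  have hsum := (hw i).hasSum.mul_left (ε * a * expWeight (c / 2) x i k)
  refine ⟨.of_norm_bounded hsum.summable hbound, (tsum_of_norm_bounded hsum hbound).trans ?_⟩
  have hw_ik := (expWeight_pos (c := c / 2) (x := x) i k).le
  calc ε * a * expWeight (c / 2) x i k * ∑' j, expWeight (c / 2) x i j
      ≤ ε * a * expWeight (c / 2) x i k * S := mul_le_mul_of_nonneg_left (hS i) (by positivity)
    _ = ε * a * S * expWeight (c / 2) x i k := by ring

/-- `neumannTerm D n` is the power `D ^ (n + 1)`, with infinite matrix products taken entrywise
as `tsum`s. -/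
noncomputable def neumannTerm (D : Matrix ι ι 𝕜) : ℕ → Matrix ι ι 𝕜
  | 0 => D
  | n + 1 => fun i k => ∑' j, D i j * neumannTerm D n j k

noncomputable def neumannSum (D : Matrix ι ι 𝕜) : Matrix ι ι 𝕜 :=
  fun i k => ∑' n, neumannTerm D n i k

theorem norm_neumannTerm_le (hc : 0 ≤ c) (hw : ∀ i, Summable (expWeight (c / 2) x i))
    (hS : ∀ i, ∑' j, expWeight (c / 2) x i j ≤ S) (hε : 0 ≤ ε) (hεS : ε * S ≤ 1 / 2)
    {D : Matrix ι ι 𝕜} (hD : ∀ i j, ‖D i j‖ ≤ ε * expWeight c x i j) (n : ℕ) (i k : ι) :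
    ‖neumannTerm D n i k‖ ≤ ε * (1 / 2) ^ n * expWeight (c / 2) x i k := by
  induction n generalizing i k with
  | zero =>
    simpa [neumannTerm] using
      (hD i k).trans (mul_le_mul_of_nonneg_left (expWeight_le_expWeight_half hc i k) hε)
  | succ n ih =>
    have hw_ik := (expWeight_pos (c := c / 2) (x := x) i k).le
    calc ‖neumannTerm D (n + 1) i k‖
        ≤ ε * (ε * (1 / 2) ^ n) * S * expWeight (c / 2) x i k :=
          (summable_mul_and_norm_tsum_mul_le hc hw hS hε (by positivity) hD ih i k).2
      _ = (ε * S) * (ε * (1 / 2) ^ n * expWeight (c / 2) x i k) := by ring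
      _ ≤ 1 / 2 * (ε * (1 / 2) ^ n * expWeight (c / 2) x i k) :=
          mul_le_mul_of_nonneg_right hεS (by positivity)
      _ = ε * (1 / 2) ^ (n + 1) * expWeight (c / 2) x i k := by ring

theorem hasSum_neumannTerm (hc : 0 ≤ c) (hw : ∀ i, Summable (expWeight (c / 2) x i))
    (hS : ∀ i, ∑' j, expWeight (c / 2) x i j ≤ S) (hε : 0 ≤ ε) (hεS : ε * S ≤ 1 / 2)
    {D : Matrix ι ι 𝕜} (hD : ∀ i j, ‖D i j‖ ≤ ε * expWeight c x i j) (i k : ι) :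
    HasSum (fun n => neumannTerm D n i k) (neumannSum D i k) :=
  (Summable.of_norm_bounded (summable_geometric_two.mul_left (ε * expWeight (c / 2) x i k))
    fun n => (norm_neumannTerm_le hc hw hS hε hεS hD n i k).trans_eq (mul_right_comm _ _ _)).hasSum

theorem norm_neumannSum_le (hc : 0 ≤ c) (hw : ∀ i, Summable (expWeight (c / 2) x i))
    (hS : ∀ i, ∑' j, expWeight (c / 2) x i j ≤ S) (hε : 0 ≤ ε) (hεS : ε * S ≤ 1 / 2)
    {D : Matrix ι ι 𝕜} (hD : ∀ i j, ‖D i j‖ ≤ ε * expWeight c x i j) (i k : ι) :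
    ‖neumannSum D i k‖ ≤ 2 * ε * expWeight (c / 2) x i k :=
  (tsum_of_norm_bounded (hasSum_geometric_two.mul_left (ε * expWeight (c / 2) x i k))
    fun n => (norm_neumannTerm_le hc hw hS hε hεS hD n i k).trans_eq
      (mul_right_comm _ _ _)).trans_eq (by ring)

theorem hasSum_mul_neumannSum (hc : 0 ≤ c) (hw : ∀ i, Summable (expWeight (c / 2) x i))
    (hS : ∀ i, ∑' j, expWeight (c / 2) x i j ≤ S) (hε : 0 ≤ ε) (hεS : ε * S ≤ 1 / 2)
    {D : Matrix ι ι 𝕜} (hD : ∀ i j, ‖D i j‖ ≤ ε * expWeight c x i j) (i k : ι) :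
    HasSum (fun j => D i j * neumannSum D j k) (neumannSum D i k - D i k) := by
  have hDN := summable_mul_and_norm_tsum_mul_le hc hw hS hε (by positivity) hD
    (norm_neumannSum_le hc hw hS hε hεS hD) i k
  have hswap : Summable fun q : ι × ℕ => D i q.1 * neumannTerm D q.2 q.1 k := by
    refine .of_norm_bounded (((hw i).mul_of_nonneg summable_geometric_two
      (fun j => (expWeight_pos i j).le) fun n => by positivity).mul_left (ε * ε)) fun ⟨j, n⟩ => ?_
    have := norm_mul_le_expWeight hc hε (by positivity) hD
      (norm_neumannTerm_le hc hw hS hε hεS hD n) i j k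
    calc _ ≤ ε * (ε * (1 / 2) ^ n) * expWeight (c / 2) x i k * expWeight (c / 2) x i j := this
      _ = ε * ε * (expWeight (c / 2) x i j * (1 / 2) ^ n) * expWeight (c / 2) x i k := by ring
      _ ≤ ε * ε * (expWeight (c / 2) x i j * (1 / 2) ^ n) :=
        mul_le_of_le_one_right (by have := (expWeight_pos (c := c / 2) (x := x) i j).le; positivity)
          (expWeight_le_one (by positivity) i k)
  rw [hDN.1.hasSum_iff]
  calc ∑' j, D i j * neumannSum D j k = ∑' n, neumannTerm D (n + 1) i k :=
        tsum_mul_tsum_comm hswap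
    _ = neumannSum D i k - D i k := by
        simpa [neumannTerm] using
          ((hasSum_nat_add_iff' 1).2 (hasSum_neumannTerm hc hw hS hε hεS hD i k)).tsum_eq

theorem summable_mul_mul_of_norm_le (hc : 0 ≤ c) (hw : ∀ i, Summable (expWeight (c / 2) x i))
    (hS : ∀ i, ∑' j, expWeight (c / 2) x i j ≤ S) (hε : 0 ≤ ε) {a : ℝ} (ha : 0 ≤ a)
    {D N L : Matrix ι ι 𝕜} (hD : ∀ i j, ‖D i j‖ ≤ ε * expWeight c x i j)
    (hN : ∀ i j, ‖N i j‖ ≤ a * expWeight (c / 2) x i j)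
    (hL : ∀ i j, ‖L i j‖ ≤ a * expWeight (c / 2) x i j) (i k : ι) :
    Summable fun q : ι × ι => L i q.1 * (D q.1 q.2 * N q.2 k) := by
  refine .of_norm_bounded ((summable_expWeight_mul_expWeight hw hS i).mul_left (a * (ε * a)))
    fun ⟨j, l⟩ => ?_
  have hw_ij := (expWeight_pos (c := c / 2) (x := x) i j).le
  have hw_jl := (expWeight_pos (c := c / 2) (x := x) j l).le
  calc ‖L i j * (D j l * N l k)‖
      ≤ a * expWeight (c / 2) x i j *
          (ε * a * expWeight (c / 2) x j k * expWeight (c / 2) x j l) := by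
        rw [norm_mul]
        exact mul_le_mul (hL i j) (norm_mul_le_expWeight hc hε ha hD hN j l k) (norm_nonneg _)
          (by positivity)
    _ ≤ a * expWeight (c / 2) x i j * (ε * a * 1 * expWeight (c / 2) x j l) := by
        gcongr
        exact expWeight_le_one (by positivity) j k
    _ = a * (ε * a) * (expWeight (c / 2) x i j * expWeight (c / 2) x j l) := by ring

theorem eq_of_hasSum_mul_of_hasSum_mul (hc : 0 ≤ c) (hw : ∀ i, Summable (expWeight (c / 2) x i))
    (hS : ∀ i, ∑' j, expWeight (c / 2) x i j ≤ S) (hε : 0 ≤ ε) {a : ℝ} (ha : 0 ≤ a)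
    {D N L : Matrix ι ι 𝕜} (hD : ∀ i j, ‖D i j‖ ≤ ε * expWeight c x i j)
    (hN : ∀ i j, ‖N i j‖ ≤ a * expWeight (c / 2) x i j)
    (hL : ∀ i j, ‖L i j‖ ≤ a * expWeight (c / 2) x i j)
    (hDN : ∀ i k, HasSum (fun j => D i j * N j k) (N i k - D i k))
    (hLD : ∀ i k, HasSum (fun j => L i j * D j k) (L i k - D i k)) : L = N := by
  ext i k
  have hLN : Summable fun j => L i j * N j k := by
    refine .of_norm_bounded ((hw i).mul_left (a * a)) fun j => ?_
    have hw_ij := (expWeight_pos (c := c / 2) (x := x) i j).le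
    calc ‖L i j * N j k‖ ≤ a * expWeight (c / 2) x i j * (a * expWeight (c / 2) x j k) := by
          rw [norm_mul]
          exact mul_le_mul (hL i j) (hN j k) (norm_nonneg _) (by positivity)
      _ ≤ a * expWeight (c / 2) x i j * (a * 1) := by
          gcongr
          exact expWeight_le_one (by positivity) j k
      _ = a * a * expWeight (c / 2) x i j := by ring
  have hL_DN : HasSum (fun j => L i j * ∑' l, D j l * N l k)
      (∑' j, L i j * N j k - (L i k - D i k)) := by
    simp only [fun j => (hDN j k).tsum_eq, mul_sub]
    exact hLN.hasSum.sub (hLD i k)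
  have hLD_N : HasSum (fun l => ∑' j, L i j * (D j l * N l k))
      (∑' j, L i j * N j k - (N i k - D i k)) := by
    simp only [← mul_assoc, tsum_mul_right, fun l => (hLD i l).tsum_eq, sub_mul]
    exact hLN.hasSum.sub (hDN i k)
  have hassoc := tsum_mul_tsum_comm (a := L i) (f := fun j l => D j l * N l k)
    (summable_mul_mul_of_norm_le hc hw hS hε ha hD hN hL i k)
  have h := hL_DN.tsum_eq.symm.trans (hassoc.trans hLD_N.tsum_eq)
  linear_combination -h

theorem exists_inverse_of_norm_sub_one_le [DecidableEq ι] (hc : 0 ≤ c)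
    (hw : ∀ i, Summable (expWeight (c / 2) x i)) (hS : ∀ i, ∑' j, expWeight (c / 2) x i j ≤ S)
    (hε : 0 ≤ ε) (hεS : ε * S ≤ 1 / 2) {P : Matrix ι ι 𝕜}
    (hP : ∀ i j, ‖P i j - (1 : Matrix ι ι 𝕜) i j‖ ≤ ε * expWeight c x i j) :
    ∃ N : Matrix ι ι 𝕜, (∀ i k, HasSum (fun j => P i j * (1 + N) j k) ((1 : Matrix ι ι 𝕜) i k)) ∧
      (∀ i k, HasSum (fun j => (1 + N) i j * P j k) ((1 : Matrix ι ι 𝕜) i k)) ∧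
      ∀ i k, ‖N i k‖ ≤ 2 * ε * expWeight (c / 2) x i k := by
  obtain ⟨D, rfl⟩ : ∃ D : Matrix ι ι 𝕜, P = 1 - D := ⟨1 - P, (sub_sub_cancel 1 P).symm⟩
  have hD (i j : ι) : ‖D i j‖ ≤ ε * expWeight c x i j := by
    simpa [norm_sub_rev] using hP i j
  have hDt (i j : ι) : ‖Dᵀ i j‖ ≤ ε * expWeight c x i j := by
    rw [transpose_apply, expWeight_comm]
    exact hD j i
  -- The Neumann series of `Dᵀ`, transposed back, is a left inverse of `1 - D`.
  have hLD (i k : ι) : HasSum (fun j => (neumannSum Dᵀ)ᵀ i j * D j k)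
      ((neumannSum Dᵀ)ᵀ i k - D i k) := by
    simpa only [transpose_apply, mul_comm] using hasSum_mul_neumannSum hc hw hS hε hεS hDt k i
  have hL (i k : ι) : ‖(neumannSum Dᵀ)ᵀ i k‖ ≤ 2 * ε * expWeight (c / 2) x i k := by
    rw [transpose_apply, expWeight_comm]
    exact norm_neumannSum_le hc hw hS hε hεS hDt k i
  have hDN := hasSum_mul_neumannSum hc hw hS hε hεS hD
  have hLN := eq_of_hasSum_mul_of_hasSum_mul hc hw hS hε (by positivity) hD
    (norm_neumannSum_le hc hw hS hε hεS hD) hL hDN hLD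
  refine ⟨neumannSum D, fun i k => ?_, fun i k => ?_, norm_neumannSum_le hc hw hS hε hεS hD⟩
  · have h : HasSum (fun j => (-D) i j * neumannSum D j k) (-(neumannSum D i k - D i k)) := by
      simpa only [Matrix.neg_apply, neg_mul] using (hDN i k).neg
    convert hasSum_one_add_mul_one_add h using 1
    · rw [sub_eq_add_neg]
    · simp only [Matrix.neg_apply]; ring
  · have h : HasSum (fun j => neumannSum D i j * (-D) j k) (-(neumannSum D i k - D i k)) := by
      simpa only [Matrix.neg_apply, mul_neg, hLN] using (hLD i k).neg
    convert hasSum_one_add_mul_one_add h using 1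
    · rw [sub_eq_add_neg]
    · simp only [Matrix.neg_apply]; ring

end Neumann

end

theorem stmt_18 (c K : ℝ) (hc : 0 < c) (hK : 0 < K) :
    ∃ ε₀ C : ℝ, 0 < ε₀ ∧ 0 < C ∧
      ∀ (ι : Type) [DecidableEq ι] (emb : ι → ℝ × ℝ), Function.Injective emb →
        (∀ i : ι, Summable fun j : ι => Real.exp (-(c / 2) * dist (emb i) (emb j))) →
        (∀ i : ι, (∑' j : ι,
            if j = i then 0 else Real.exp (-(c / 2) * dist (emb i) (emb j))) ≤ K) →
        ∀ (H : Type) [NormedAddCommGroup H] [InnerProductSpace ℂ H] (p : ι → H),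
          (∀ i, ‖p i‖ = 1) →
          ∀ ε : ℝ, 0 < ε → ε ≤ ε₀ →
            (∀ i j : ι, ‖(inner ℂ (p i) (p j) : ℂ) - (if i = j then 1 else 0)‖ ≤
              ε * Real.exp (-c * dist (emb i) (emb j))) →
            ∃ M : ι → ι → ℂ,
              (∀ i k : ι, Summable (fun j : ι => (inner ℂ (p i) (p j) : ℂ) * M j k) ∧
                (∑' j : ι, (inner ℂ (p i) (p j) : ℂ) * M j k) = if i = k then 1 else 0) ∧
              (∀ i k : ι, Summable (fun j : ι => M i j * (inner ℂ (p j) (p k) : ℂ)) ∧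
                (∑' j : ι, M i j * (inner ℂ (p j) (p k) : ℂ)) = if i = k then 1 else 0) ∧
              (∀ i j : ι, ‖M i j - (if i = j then 1 else 0)‖ ≤
                C * ε * Real.exp (-(c / 2) * dist (emb i) (emb j))) := by
  refine ⟨1 / (2 * (K + 1)), 2, by positivity, two_pos, ?_⟩
  intro ι _ emb _ hw hoff H _ _ p _ ε hε hεε₀ hP
  have hS (i : ι) : ∑' j, expWeight (c / 2) emb i j ≤ K + 1 := tsum_expWeight_le (hw i) (hoff i)
  have hεS : ε * (K + 1) ≤ 1 / 2 := by
    have := (le_div_iff₀ (by positivity)).1 hεε₀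
    linarith
  obtain ⟨N, hPM, hMP, hN⟩ :=
    exists_inverse_of_norm_sub_one_le (P := fun i j => inner ℂ (p i) (p j)) hc.le hw hS hε.le hεS
      (by simpa only [one_apply, expWeight] using hP)
  refine ⟨(1 + N : Matrix ι ι ℂ), fun i k => ?_, fun i k => ?_, fun i j => ?_⟩
  · rw [← one_apply]
    exact ⟨(hPM i k).summable, (hPM i k).tsum_eq⟩
  · rw [← one_apply]
    exact ⟨(hMP i k).summable, (hMP i k).tsum_eq⟩
  · rw [← one_apply, Matrix.add_apply, add_sub_cancel_left]
    exact hN i j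
end
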